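/- arXiv:2312.10958 — 3 statements merged into one kernel-verified Lean document; each statement's English description precedes it below -/
import Mathlib

section
/- At the true parameter β of the logistic regression model and under the MAR assumption, the MI1 influence function has mean zero: E[Φ₁(β,π₁)] = 0; more precisely, E[δ₁₁S₁(β)/π₁(Y₁,V₁)] = 0 and E[S*ₖ₁(β)(δ₁ₖ − δ₁₁πₖ(Y₁,V₁)/π₁(Y₁,V₁))] = 0 for each k = 2, 3, 4. -/
noncomputable section

/-- The logistic function `H(u) = (1 + e^{-u})⁻¹`. -/
def Hlog (u : ℝ) : ℝ := (1 + Real.exp (-u))⁻¹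

/-- The derivative `H⁽¹⁾` of the logistic function. -/
def Hlog' (u : ℝ) : ℝ := deriv Hlog u

open scoped Classical in
/-- Real-valued indicator `I(P)` of a proposition. -/
def ind (P : Prop) : ℝ := if P then 1 else 0

/-- The linear predictor `βᵀx`. -/
def lin {m : ℕ} (β x : Fin m → ℝ) : ℝ := ∑ j, β j * x j

/-- `f t → 0` in probability along the filter `l`, i.e. `f = o_p(1)`. -/
def SmallOP {Ω : Type*} [MeasurableSpace Ω] (μ : MeasureTheory.Measure Ω) {ι : Type*}
    (l : Filter ι) (f : ι → Ω → ℝ) : Prop :=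
  ∀ ε : ℝ, 0 < ε → Filter.Tendsto (fun t => μ {ω | ε ≤ |f t ω|}) l (nhds 0)

/-- `f t` is bounded in probability along the filter `l`, i.e. `f = O_p(1)`. -/
def BigOP {Ω : Type*} [MeasurableSpace Ω] (μ : MeasureTheory.Measure Ω) {ι : Type*}
    (l : Filter ι) (f : ι → Ω → ℝ) : Prop :=
  ∀ ε : ℝ, 0 < ε → ∃ C : ℝ, 0 < C ∧ ∀ᶠ t in l, μ {ω | C ≤ |f t ω|} ≤ ENNReal.ofReal ε

/-- Data-generating setup for logistic regression with two discrete covariate blocks `X̃₁, X̃₂`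
missing at random separately or simultaneously, always-observed covariates `Z`, surrogates
`W = (W₁, W₂)`, missingness-pattern indicators `δ j` (`j = 0,1,2,3` coding `δ₁,δ₂,δ₃,δ₄` of the
paper), selection probabilities `pi j (y, v)` (coding `π_{j+1}(y,v)`), conditional-expectation
scores `sstar2/3/4` (coding `S*₂ᵢ, S*₃ᵢ, S*₄ᵢ`), and the multiple-imputation draws of the
MI1 method (`g12, g13, g14`: the values imputed for the missing blocks under patterns
`δ₂, δ₃, δ₄`, for sample size `n`, individual `i` and imputation copy `v`) and of the MI2
method (`g22, g23, g24`). The full covariate vector `𝒳 = (1, X̃₁ᵀ, X̃₂ᵀ, Zᵀ)ᵀ ∈ ℝ^{d+1}` is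
assembled from the blocks by `cvec`. -/
structure MISetup (d p1 p2 q w : ℕ) where
  Ω : Type*
  [mΩ : MeasurableSpace Ω]
  μ : MeasureTheory.Measure Ω
  [pμ : MeasureTheory.IsProbabilityMeasure μ]
  Y : ℕ → Ω → ℝ
  X1 : ℕ → Ω → Fin p1 → ℝ
  X2 : ℕ → Ω → Fin p2 → ℝ
  Z : ℕ → Ω → Fin q → ℝ
  W : ℕ → Ω → Fin w → ℝ
  cvec : (Fin p1 → ℝ) → (Fin p2 → ℝ) → (Fin q → ℝ) → Fin (d + 1) → ℝ
  δ : Fin 4 → ℕ → Ω → ℝ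
  pi : Fin 4 → ℝ → (Fin q → ℝ) × (Fin w → ℝ) → ℝ
  β₀ : Fin (d + 1) → ℝ
  sstar2 : (Fin (d + 1) → ℝ) → ℝ → (Fin p2 → ℝ) → (Fin q → ℝ) × (Fin w → ℝ) → Fin (d + 1) → ℝ
  sstar3 : (Fin (d + 1) → ℝ) → ℝ → (Fin p1 → ℝ) → (Fin q → ℝ) × (Fin w → ℝ) → Fin (d + 1) → ℝ
  sstar4 : (Fin (d + 1) → ℝ) → ℝ → (Fin q → ℝ) × (Fin w → ℝ) → Fin (d + 1) → ℝ
  g12 : ℕ → ℕ → ℕ → Ω → Fin p1 → ℝ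
  g13 : ℕ → ℕ → ℕ → Ω → Fin p2 → ℝ
  g14 : ℕ → ℕ → ℕ → Ω → (Fin p1 → ℝ) × (Fin p2 → ℝ)
  g22 : ℕ → ℕ → ℕ → Ω → Fin p1 → ℝ
  g23 : ℕ → ℕ → ℕ → Ω → Fin p2 → ℝ
  g24 : ℕ → ℕ → ℕ → Ω → (Fin p1 → ℝ) × (Fin p2 → ℝ)

attribute [instance] MISetup.mΩ MISetup.pμ

open MeasureTheory ProbabilityTheory Filter Finset

namespace MISetup

variable {d p1 p2 q w : ℕ} (E : MISetup d p1 p2 q w)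

/-- The full covariate vector `𝒳ᵢ = (1, X̃₁ᵢᵀ, X̃₂ᵢᵀ, Zᵢᵀ)ᵀ`. -/
def XX (i : ℕ) (ω : E.Ω) : Fin (d + 1) → ℝ := E.cvec (E.X1 i ω) (E.X2 i ω) (E.Z i ω)

/-- `Vᵢ = (Zᵢ, Wᵢ)`. -/
def Vv (i : ℕ) (ω : E.Ω) : (Fin q → ℝ) × (Fin w → ℝ) := (E.Z i ω, E.W i ω)

/-- The individual score `Sᵢ(β) = 𝒳ᵢ (Yᵢ − H(βᵀ𝒳ᵢ))`. -/
def S (β : Fin (d + 1) → ℝ) (i : ℕ) (ω : E.Ω) : Fin (d + 1) → ℝ :=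
  fun j => E.XX i ω j * (E.Y i ω - Hlog (lin β (E.XX i ω)))

/-- The full data vector of individual `i`. -/
def Dat (i : ℕ) (ω : E.Ω) :
    ℝ × (Fin p1 → ℝ) × (Fin p2 → ℝ) × (Fin q → ℝ) × (Fin w → ℝ) × (Fin 4 → ℝ) :=
  (E.Y i ω, E.X1 i ω, E.X2 i ω, E.Z i ω, E.W i ω, fun j => E.δ j i ω)

/-- The σ-algebra generated by the data of the first `n` individuals. -/
def dataSA (n : ℕ) : MeasurableSpace E.Ω :=
  MeasurableSpace.comap (fun ω (i : Fin n) => E.Dat i ω) inferInstance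

/-- Matching predicate used by the MI1 empirical conditional CDFs: pattern `k = 0` (i.e. `δ₂`)
matches on `(Y, X̃₂, V)`, pattern `k = 1` (i.e. `δ₃`) on `(Y, X̃₁, V)`, and pattern `k = 2`
(i.e. `δ₄`) on `(Y, V)`. -/
def mt (k : Fin 3) (i r : ℕ) (ω : E.Ω) : Prop :=
  if k = 0 then E.Y r ω = E.Y i ω ∧ E.X2 r ω = E.X2 i ω ∧ E.Vv r ω = E.Vv i ω
  else if k = 1 then E.Y r ω = E.Y i ω ∧ E.X1 r ω = E.X1 i ω ∧ E.Vv r ω = E.Vv i ω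
  else E.Y r ω = E.Y i ω ∧ E.Vv r ω = E.Vv i ω

/-- MI1 empirical imputation weights. -/
def w1 (k : Fin 3) (n i r : ℕ) (ω : E.Ω) : ℝ :=
  E.δ 0 r ω * ind (E.mt k i r ω) / ∑ s ∈ range n, E.δ 0 s ω * ind (E.mt k i s ω)

/-- MI2 empirical imputation weights. -/
def w2 (k : Fin 3) (n i r : ℕ) (ω : E.Ω) : ℝ :=
  if k = 0 then
    (E.δ 0 r ω + E.δ 2 r ω) * ind (E.mt 2 i r ω) /
      ∑ s ∈ range n, (E.δ 0 s ω + E.δ 2 s ω) * ind (E.mt 2 i s ω)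
  else if k = 1 then
    (E.δ 0 r ω + E.δ 1 r ω) * ind (E.mt 2 i r ω) /
      ∑ s ∈ range n, (E.δ 0 s ω + E.δ 1 s ω) * ind (E.mt 2 i s ω)
  else
    E.δ 0 r ω * ind (E.mt 2 i r ω) / ∑ s ∈ range n, E.δ 0 s ω * ind (E.mt 2 i s ω)

/-- Candidate full covariate vector obtained when the pattern-`k` missing blocks of individual
`i` are replaced by the corresponding blocks of individual `r`. -/
def cand (k : Fin 3) (i r : ℕ) (ω : E.Ω) : Fin (d + 1) → ℝ :=
  if k = 0 then E.cvec (E.X1 r ω) (E.X2 i ω) (E.Z i ω)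
  else if k = 1 then E.cvec (E.X1 i ω) (E.X2 r ω) (E.Z i ω)
  else E.cvec (E.X1 r ω) (E.X2 r ω) (E.Z i ω)

/-- The `v`-th MI1 imputed full covariate vector `𝒳̃_{(k+2) i v}` of individual `i`. -/
def XXi1 (n : ℕ) (k : Fin 3) (i v : ℕ) (ω : E.Ω) : Fin (d + 1) → ℝ :=
  if k = 0 then E.cvec (E.g12 n i v ω) (E.X2 i ω) (E.Z i ω)
  else if k = 1 then E.cvec (E.X1 i ω) (E.g13 n i v ω) (E.Z i ω)
  else E.cvec (E.g14 n i v ω).1 (E.g14 n i v ω).2 (E.Z i ω)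

/-- The `v`-th MI2 imputed full covariate vector `𝒳̃̃_{(k+2) i v}` of individual `i`. -/
def XXi2 (n : ℕ) (k : Fin 3) (i v : ℕ) (ω : E.Ω) : Fin (d + 1) → ℝ :=
  if k = 0 then E.cvec (E.g22 n i v ω) (E.X2 i ω) (E.Z i ω)
  else if k = 1 then E.cvec (E.X1 i ω) (E.g23 n i v ω) (E.Z i ω)
  else E.cvec (E.g24 n i v ω).1 (E.g24 n i v ω).2 (E.Z i ω)

/-- The MI1 imputed score `S̃_{(k+2) i v}(β)`. -/
def Stil1 (β : Fin (d + 1) → ℝ) (n : ℕ) (k : Fin 3) (i v : ℕ) (ω : E.Ω) : Fin (d + 1) → ℝ :=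
  fun j => E.XXi1 n k i v ω j * (E.Y i ω - Hlog (lin β (E.XXi1 n k i v ω)))

/-- The MI2 imputed score `S̃̃_{(k+2) i v}(β)`. -/
def Stil2 (β : Fin (d + 1) → ℝ) (n : ℕ) (k : Fin 3) (i v : ℕ) (ω : E.Ω) : Fin (d + 1) → ℝ :=
  fun j => E.XXi2 n k i v ω j * (E.Y i ω - Hlog (lin β (E.XXi2 n k i v ω)))

/-- The summand `Λ̃ᵢ(β)` of the MI1 estimating function. -/
def Lam1 (β : Fin (d + 1) → ℝ) (n M i : ℕ) (ω : E.Ω) : Fin (d + 1) → ℝ :=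
  E.δ 0 i ω • E.S β i ω
    + ∑ k : Fin 3, E.δ k.succ i ω • ((M : ℝ)⁻¹ • ∑ v ∈ range M, E.Stil1 β n k i v ω)

/-- The summand `Λ̃̃ᵢ(β)` of the MI2 estimating function. -/
def Lam2 (β : Fin (d + 1) → ℝ) (n M i : ℕ) (ω : E.Ω) : Fin (d + 1) → ℝ :=
  E.δ 0 i ω • E.S β i ω
    + ∑ k : Fin 3, E.δ k.succ i ω • ((M : ℝ)⁻¹ • ∑ v ∈ range M, E.Stil2 β n k i v ω)

/-- The MI1 estimating function `U_{M1}(β)`. -/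
def UM1 (β : Fin (d + 1) → ℝ) (n M : ℕ) (ω : E.Ω) : Fin (d + 1) → ℝ :=
  (Real.sqrt n)⁻¹ • ∑ i ∈ range n, E.Lam1 β n M i ω

/-- The MI2 estimating function `U_{M2}(β)`. -/
def UM2 (β : Fin (d + 1) → ℝ) (n M : ℕ) (ω : E.Ω) : Fin (d + 1) → ℝ :=
  (Real.sqrt n)⁻¹ • ∑ i ∈ range n, E.Lam2 β n M i ω

/-- The MI1 influence function `Φᵢ(β, πᵢ)`. -/
def Phi (β : Fin (d + 1) → ℝ) (i : ℕ) (ω : E.Ω) : Fin (d + 1) → ℝ :=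
  (E.δ 0 i ω / E.pi 0 (E.Y i ω) (E.Vv i ω)) • E.S β i ω
    + (E.δ 1 i ω - E.δ 0 i ω * E.pi 1 (E.Y i ω) (E.Vv i ω) / E.pi 0 (E.Y i ω) (E.Vv i ω)) •
        E.sstar2 β (E.Y i ω) (E.X2 i ω) (E.Vv i ω)
    + (E.δ 2 i ω - E.δ 0 i ω * E.pi 2 (E.Y i ω) (E.Vv i ω) / E.pi 0 (E.Y i ω) (E.Vv i ω)) •
        E.sstar3 β (E.Y i ω) (E.X1 i ω) (E.Vv i ω)
    + (E.δ 3 i ω - E.δ 0 i ω * E.pi 3 (E.Y i ω) (E.Vv i ω) / E.pi 0 (E.Y i ω) (E.Vv i ω)) •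
        E.sstar4 β (E.Y i ω) (E.Vv i ω)

/-- `η(Yᵢ, Vᵢ)` of the paper. -/
def eta (i : ℕ) (ω : E.Ω) : ℝ :=
  (E.δ 0 i ω + E.δ 2 i ω) * E.pi 1 (E.Y i ω) (E.Vv i ω) /
      (E.pi 0 (E.Y i ω) (E.Vv i ω) + E.pi 2 (E.Y i ω) (E.Vv i ω))
    + (E.δ 0 i ω + E.δ 1 i ω) * E.pi 2 (E.Y i ω) (E.Vv i ω) /
      (E.pi 0 (E.Y i ω) (E.Vv i ω) + E.pi 1 (E.Y i ω) (E.Vv i ω))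
    + E.δ 0 i ω * E.pi 3 (E.Y i ω) (E.Vv i ω) / E.pi 0 (E.Y i ω) (E.Vv i ω)

/-- The MI2 influence function `Ψᵢ(β, πᵢ)`. -/
def Psi (β : Fin (d + 1) → ℝ) (i : ℕ) (ω : E.Ω) : Fin (d + 1) → ℝ :=
  E.δ 0 i ω • E.S β i ω
    + (E.δ 1 i ω + E.δ 2 i ω + E.δ 3 i ω) • E.sstar4 β (E.Y i ω) (E.Vv i ω)
    + E.eta i ω • (E.S β i ω - E.sstar4 β (E.Y i ω) (E.Vv i ω))

/-- `U₁(β, Π) = n^{-1/2} Σᵢ Φᵢ(β, πᵢ)`. -/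
def U1 (β : Fin (d + 1) → ℝ) (n : ℕ) (ω : E.Ω) : Fin (d + 1) → ℝ :=
  (Real.sqrt n)⁻¹ • ∑ i ∈ range n, E.Phi β i ω

/-- `U₂(β, Π) = n^{-1/2} Σᵢ Ψᵢ(β, πᵢ)`. -/
def U2 (β : Fin (d + 1) → ℝ) (n : ℕ) (ω : E.Ω) : Fin (d + 1) → ℝ :=
  (Real.sqrt n)⁻¹ • ∑ i ∈ range n, E.Psi β i ω

/-- `G(β₀) = E[𝒳₁^{⊗2} H⁽¹⁾(β₀ᵀ𝒳₁)]`. -/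
def Gmat : Matrix (Fin (d + 1)) (Fin (d + 1)) ℝ :=
  Matrix.of fun j l => ∫ ω, E.XX 0 ω j * E.XX 0 ω l * Hlog' (lin E.β₀ (E.XX 0 ω)) ∂E.μ

/-- `M₁(β, π₁) = E[Φ₁^{⊗2}(β, π₁)]`. -/
def Mmat1 (β : Fin (d + 1) → ℝ) : Matrix (Fin (d + 1)) (Fin (d + 1)) ℝ :=
  Matrix.of fun j l => ∫ ω, E.Phi β 0 ω j * E.Phi β 0 ω l ∂E.μ

/-- `M₂(β, π₁) = E[Ψ₁^{⊗2}(β, π₁)]`. -/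
def Mmat2 (β : Fin (d + 1) → ℝ) : Matrix (Fin (d + 1)) (Fin (d + 1)) ℝ :=
  Matrix.of fun j l => ∫ ω, E.Psi β 0 ω j * E.Psi β 0 ω l ∂E.μ

/-- `Δ_{M1} = G⁻¹(β₀) M₁(β₀, π₁) [G⁻¹(β₀)]ᵀ`. -/
def Delta1 : Matrix (Fin (d + 1)) (Fin (d + 1)) ℝ :=
  E.Gmat⁻¹ * E.Mmat1 E.β₀ * (E.Gmat⁻¹).transpose

/-- `Δ_{M2} = G⁻¹(β₀) M₂(β₀, π₁) [G⁻¹(β₀)]ᵀ`. -/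
def Delta2 : Matrix (Fin (d + 1)) (Fin (d + 1)) ℝ :=
  E.Gmat⁻¹ * E.Mmat2 E.β₀ * (E.Gmat⁻¹).transpose

/-- Basic model assumptions: measurability, binary outcome and indicators, exactly one
missingness pattern per individual, intercept coordinate of the covariate vector, i.i.d.
sampling, discreteness of the covariates and surrogates, condition (C1) on the selection
probabilities, missingness at random, the logistic regression model (together with the
surrogacy requirement `P(Y=1|X,Z,W₁,W₂) = P(Y=1|X,Z) = H(β₀ᵀ𝒳)`), and the definition of
`S*₂ᵢ, S*₃ᵢ, S*₄ᵢ` as conditional expectations of the score. -/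
structure Base {d p1 p2 q w : ℕ} (E : MISetup d p1 p2 q w) : Prop where
  measY : ∀ i, Measurable (E.Y i)
  measX1 : ∀ i, Measurable (E.X1 i)
  measX2 : ∀ i, Measurable (E.X2 i)
  measZ : ∀ i, Measurable (E.Z i)
  measW : ∀ i, Measurable (E.W i)
  measδ : ∀ j i, Measurable (E.δ j i)
  Ybin : ∀ i ω, E.Y i ω = 0 ∨ E.Y i ω = 1
  δbin : ∀ j i ω, E.δ j i ω = 0 ∨ E.δ j i ω = 1
  δsum : ∀ i ω, ∑ j : Fin 4, E.δ j i ω = 1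
  intercept : ∀ a b c, E.cvec a b c 0 = 1
  iid : iIndepFun E.Dat E.μ
  ident : ∀ i, IdentDistrib (E.Dat i) (E.Dat 0) E.μ E.μ
  disc : Set.Countable (Set.range fun ω => (E.X1 0 ω, E.X2 0 ω, E.Z 0 ω, E.W 0 ω))
  pipos : ∀ j y v, 0 < E.pi j y v
  pisum : ∀ y v, ∑ j : Fin 4, E.pi j y v = 1
  mar : ∀ j i,
    MeasureTheory.condExp
        (MeasurableSpace.comap (fun ω => (E.Y i ω, E.X1 i ω, E.X2 i ω, E.Vv i ω)) inferInstance)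
        E.μ (E.δ j i)
      =ᵐ[E.μ] fun ω => E.pi j (E.Y i ω) (E.Vv i ω)
  model : ∀ i,
    MeasureTheory.condExp
        (MeasurableSpace.comap (fun ω => (E.X1 i ω, E.X2 i ω, E.Z i ω, E.W i ω)) inferInstance)
        E.μ (E.Y i)
      =ᵐ[E.μ] fun ω => Hlog (lin E.β₀ (E.XX i ω))
  hsstar2 : ∀ β j,
    (fun ω => E.sstar2 β (E.Y 0 ω) (E.X2 0 ω) (E.Vv 0 ω) j) =ᵐ[E.μ]
      MeasureTheory.condExp
        (MeasurableSpace.comap (fun ω => (E.Y 0 ω, E.X2 0 ω, E.Vv 0 ω)) inferInstance)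
        E.μ (fun ω => E.S β 0 ω j)
  hsstar3 : ∀ β j,
    (fun ω => E.sstar3 β (E.Y 0 ω) (E.X1 0 ω) (E.Vv 0 ω) j) =ᵐ[E.μ]
      MeasureTheory.condExp
        (MeasurableSpace.comap (fun ω => (E.Y 0 ω, E.X1 0 ω, E.Vv 0 ω)) inferInstance)
        E.μ (fun ω => E.S β 0 ω j)
  hsstar4 : ∀ β j,
    (fun ω => E.sstar4 β (E.Y 0 ω) (E.Vv 0 ω) j) =ᵐ[E.μ]
      MeasureTheory.condExp
        (MeasurableSpace.comap (fun ω => (E.Y 0 ω, E.Vv 0 ω)) inferInstance)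
        E.μ (fun ω => E.S β 0 ω j)

/-- The imputation mechanism: given the data of the first `n` individuals, the MI1 (resp. MI2)
imputed covariate vectors over all patterns `k`, individuals `i < n` and copies `v` are
conditionally independent, each distributed according to the corresponding empirical
(conditional) CDF, i.e. taking the candidate value indexed by `r < n` with weight `w1`
(resp. `w2`). -/
structure Imp {d p1 p2 q w : ℕ} (E : MISetup d p1 p2 q w) : Prop where
  measg12 : ∀ n i v, Measurable (E.g12 n i v)
  measg13 : ∀ n i v, Measurable (E.g13 n i v)
  measg14 : ∀ n i v, Measurable (E.g14 n i v)
  measg22 : ∀ n i v, Measurable (E.g22 n i v)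
  measg23 : ∀ n i v, Measurable (E.g23 n i v)
  measg24 : ∀ n i v, Measurable (E.g24 n i v)
  law1 : ∀ (n : ℕ) (T : Finset (Fin 3 × ℕ × ℕ)) (g : Fin 3 × ℕ × ℕ → (Fin (d + 1) → ℝ) → ℝ),
    (∀ p, Measurable (g p)) → (∀ p, ∃ C, ∀ x, |g p x| ≤ C) → (∀ p ∈ T, p.2.1 < n) →
    MeasureTheory.condExp (E.dataSA n) E.μ
        (fun ω => ∏ p ∈ T, g p (E.XXi1 n p.1 p.2.1 p.2.2 ω))
      =ᵐ[E.μ] fun ω => ∏ p ∈ T, ∑ r ∈ range n, E.w1 p.1 n p.2.1 r ω * g p (E.cand p.1 p.2.1 r ω)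
  law2 : ∀ (n : ℕ) (T : Finset (Fin 3 × ℕ × ℕ)) (g : Fin 3 × ℕ × ℕ → (Fin (d + 1) → ℝ) → ℝ),
    (∀ p, Measurable (g p)) → (∀ p, ∃ C, ∀ x, |g p x| ≤ C) → (∀ p ∈ T, p.2.1 < n) →
    MeasureTheory.condExp (E.dataSA n) E.μ
        (fun ω => ∏ p ∈ T, g p (E.XXi2 n p.1 p.2.1 p.2.2 ω))
      =ᵐ[E.μ] fun ω => ∏ p ∈ T, ∑ r ∈ range n, E.w2 p.1 n p.2.1 r ω * g p (E.cand p.1 p.2.1 r ω)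

/-- Condition (C2) for the MI1 method: `E[Φ₁^{⊗2}(β, π)]` is positive definite in a
neighborhood of the true `β₀`. -/
def C2MI1 : Prop := ∃ U ∈ nhds E.β₀, ∀ β ∈ U, (E.Mmat1 β).PosDef

/-- Condition (C2) for the MI2 method: `E[Ψ₁^{⊗2}(β, π)]` is positive definite in a
neighborhood of the true `β₀`. -/
def C2MI2 : Prop := ∃ U ∈ nhds E.β₀, ∀ β ∈ U, (E.Mmat2 β).PosDef

/-- Condition (C3) for the MI1 method: in a neighborhood of the true `β₀`, the summands of
`U_{M1}` are almost surely differentiable in `β`, with derivative dominated by an integrable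
function. -/
def C3MI1 : Prop :=
  ∃ U ∈ nhds E.β₀, ∃ g : E.Ω → ℝ, Integrable g E.μ ∧
    ∀ n M i j, ∀ᵐ ω ∂E.μ, ∀ β ∈ U,
      DifferentiableAt ℝ (fun b => E.Lam1 b n M i ω j) β ∧
        ‖fderiv ℝ (fun b => E.Lam1 b n M i ω j) β‖ ≤ g ω

/-- Condition (C3) for the MI2 method. -/
def C3MI2 : Prop :=
  ∃ U ∈ nhds E.β₀, ∃ g : E.Ω → ℝ, Integrable g E.μ ∧
    ∀ n M i j, ∀ᵐ ω ∂E.μ, ∀ β ∈ U,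
      DifferentiableAt ℝ (fun b => E.Lam2 b n M i ω j) β ∧
        ‖fderiv ℝ (fun b => E.Lam2 b n M i ω j) β‖ ≤ g ω

end MISetup

open MeasureTheory ProbabilityTheory Filter Finset


set_option linter.unusedSectionVars false
section Aux
variable {Ω γ : Type*} [MeasurableSpace Ω] [MeasurableSpace γ] [MeasurableSingletonClass γ]
  {μ : Measure Ω} [IsProbabilityMeasure μ] {T : Ω → γ}

lemma aux_meas_comp (hT : Measurable T) (hC : (Set.range T).Countable) (f : γ → ℝ) :
    Measurable fun ω => f (T ω) := by
  intro B hB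
  have h : (fun ω => f (T ω)) ⁻¹' B = T ⁻¹' (f ⁻¹' B ∩ Set.range T) := by
    ext ω
    simp [Set.mem_preimage]
  rw [h]
  exact hT ((hC.mono Set.inter_subset_right).measurableSet)

lemma aux_disjoint : Pairwise (Function.onFun Disjoint fun c : Set.range T => T ⁻¹' {(c : γ)}) := by
  intro c c' hcc'
  refine Set.disjoint_left.mpr fun ω h1 h2 => hcc' (Subtype.ext ?_)
  simp only [Set.mem_preimage, Set.mem_singleton_iff] at h1 h2
  rw [← h1, ← h2]

lemma aux_cover : (⋃ c : Set.range T, T ⁻¹' {(c : γ)}) = Set.univ :=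
  Set.eq_univ_of_forall fun ω => Set.mem_iUnion.mpr ⟨⟨T ω, ⟨ω, rfl⟩⟩, rfl⟩

lemma aux_lintegral_atoms (hT : Measurable T) (hC : (Set.range T).Countable)
    (f : Ω → ENNReal) :
    ∫⁻ ω, f ω ∂μ = ∑' c : Set.range T, ∫⁻ ω in T ⁻¹' {(c : γ)}, f ω ∂μ := by
  have := hC.to_subtype
  rw [← lintegral_iUnion (fun c => hT (measurableSet_singleton _)) aux_disjoint f, aux_cover,
    Measure.restrict_univ]

lemma aux_integral_atoms (hT : Measurable T) (hC : (Set.range T).Countable)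
    {f : Ω → ℝ} (hf : Integrable f μ) :
    ∫ ω, f ω ∂μ = ∑' c : Set.range T, ∫ ω in T ⁻¹' {(c : γ)}, f ω ∂μ := by
  have := hC.to_subtype
  have h1 : ∫ ω, f ω ∂μ = ∫ ω in (⋃ c : Set.range T, T ⁻¹' {(c : γ)}), f ω ∂μ := by
    rw [aux_cover, Measure.restrict_univ]
  rw [h1, integral_iUnion (fun c => hT (measurableSet_singleton _)) aux_disjoint
    (by rw [aux_cover]; exact integrableOn_univ.mpr hf)]

lemma aux_atom_law (hT : Measurable T) {a : Ω → ℝ} (ha : Integrable a μ) {p : γ → ℝ}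
    (hce : MeasureTheory.condExp (MeasurableSpace.comap T inferInstance) μ a
      =ᵐ[μ] fun ω => p (T ω)) (c : γ) :
    ∫ ω in T ⁻¹' {c}, a ω ∂μ = p c * (μ (T ⁻¹' {c})).toReal := by
  have hm : MeasurableSpace.comap T inferInstance ≤ ‹MeasurableSpace Ω› := hT.comap_le
  have hAm : MeasurableSet[MeasurableSpace.comap T inferInstance] (T ⁻¹' {c}) :=
    ⟨{c}, measurableSet_singleton c, rfl⟩
  have hA : MeasurableSet (T ⁻¹' {c}) := hT (measurableSet_singleton c)
  haveI : SigmaFinite (μ.trim hm) := by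
    have : IsFiniteMeasure (μ.trim hm) := isFiniteMeasure_trim hm
    exact this.toSigmaFinite
  have h1 := setIntegral_condExp hm ha hAm
  rw [← h1]
  have h2 : ∫ ω in T ⁻¹' {c},
        (MeasureTheory.condExp (MeasurableSpace.comap T inferInstance) μ a) ω ∂μ
      = ∫ ω in T ⁻¹' {c}, p (T ω) ∂μ :=
    integral_congr_ae (ae_restrict_of_ae hce)
  rw [h2]
  have h3 : ∫ ω in T ⁻¹' {c}, p (T ω) ∂μ = ∫ ω in T ⁻¹' {c}, p c ∂μ :=
    setIntegral_congr_fun hA fun ω hω => by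
      rw [Set.mem_preimage, Set.mem_singleton_iff] at hω
      simp [hω]
  rw [h3, setIntegral_const, smul_eq_mul, mul_comm, measureReal_def]

lemma aux_atom_law_lint {a : Ω → ℝ} (ha : Integrable a μ)
    (ha0 : ∀ ω, 0 ≤ a ω) {c : γ} {p : γ → ℝ} (hp : 0 ≤ p c)
    (hlaw : ∫ ω in T ⁻¹' {c}, a ω ∂μ = p c * (μ (T ⁻¹' {c})).toReal) :
    ∫⁻ ω in T ⁻¹' {c}, ENNReal.ofReal (a ω) ∂μ = ENNReal.ofReal (p c) * μ (T ⁻¹' {c}) := by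
  rw [← ofReal_integral_eq_lintegral_ofReal ha.restrict (Filter.Eventually.of_forall ha0),
    hlaw, ENNReal.ofReal_mul hp, ENNReal.ofReal_toReal (measure_ne_top μ _)]

lemma aux_master (hT : Measurable T) (hC : (Set.range T).Countable)
    {a : Ω → ℝ} (hameas : Measurable a) (ha0 : ∀ ω, 0 ≤ a ω) (ha1 : ∀ ω, a ω ≤ 1)
    {p : γ → ℝ} (hp : ∀ c, 0 ≤ p c)
    (hlaw : ∀ c, ∫ ω in T ⁻¹' {c}, a ω ∂μ = p c * (μ (T ⁻¹' {c})).toReal)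
    {φ : γ → ℝ} (hφ : Integrable (fun ω => p (T ω) * φ (T ω)) μ) :
    Integrable (fun ω => a ω * φ (T ω)) μ ∧
      ∫ ω, a ω * φ (T ω) ∂μ = ∫ ω, p (T ω) * φ (T ω) ∂μ := by
  have hA : ∀ c : γ, MeasurableSet (T ⁻¹' {c}) := fun c => hT (measurableSet_singleton c)
  have ha_int : Integrable a μ := by
    refine ⟨hameas.aestronglyMeasurable, (hasFiniteIntegral_const (1 : ℝ)).mono' ?_⟩
    exact Filter.Eventually.of_forall fun ω => by
      rw [Real.norm_eq_abs, abs_of_nonneg (ha0 ω)]; exact ha1 ω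
  have hmφ : Measurable fun ω => φ (T ω) := aux_meas_comp hT hC φ
  have hmeas : Measurable fun ω => a ω * φ (T ω) := hameas.mul hmφ
  have hmeas2 : Measurable fun ω => p (T ω) * φ (T ω) := aux_meas_comp hT hC fun c => p c * φ c
  have hAt : ∀ c : γ, ∫⁻ ω in T ⁻¹' {c}, (‖a ω * φ (T ω)‖₊ : ENNReal) ∂μ
      = ∫⁻ ω in T ⁻¹' {c}, (‖p (T ω) * φ (T ω)‖₊ : ENNReal) ∂μ := by
    intro c
    have hL : ∫⁻ ω in T ⁻¹' {c}, (‖a ω * φ (T ω)‖₊ : ENNReal) ∂μ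
        = ∫⁻ ω in T ⁻¹' {c}, ENNReal.ofReal (a ω) * ENNReal.ofReal |φ c| ∂μ := by
      refine setLIntegral_congr_fun (hA c) (fun ω hω => ?_)
      rw [Set.mem_preimage, Set.mem_singleton_iff] at hω
      rw [← enorm_eq_nnnorm, ← ofReal_norm, Real.norm_eq_abs, abs_mul, hω,
        abs_of_nonneg (ha0 ω), ENNReal.ofReal_mul (ha0 ω)]
    have hR : ∫⁻ ω in T ⁻¹' {c}, (‖p (T ω) * φ (T ω)‖₊ : ENNReal) ∂μ
        = ENNReal.ofReal (p c) * ENNReal.ofReal |φ c| * μ (T ⁻¹' {c}) := by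
      rw [setLIntegral_congr_fun (hA c)
        (fun ω hω => ?_), setLIntegral_const]
      rw [Set.mem_preimage, Set.mem_singleton_iff] at hω
      rw [← enorm_eq_nnnorm, ← ofReal_norm, Real.norm_eq_abs, abs_mul, hω,
        abs_of_nonneg (hp c), ENNReal.ofReal_mul (hp c)]
    rw [hL, lintegral_mul_const _ hameas.ennreal_ofReal,
      aux_atom_law_lint ha_int ha0 (hp c) (hlaw c), hR]
    ring
  have hfin : (fun ω => a ω * φ (T ω)) =
      (fun ω => a ω * φ (T ω)) := rfl
  have h1 : ∫⁻ ω, (‖a ω * φ (T ω)‖₊ : ENNReal) ∂μ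
      = ∫⁻ ω, (‖p (T ω) * φ (T ω)‖₊ : ENNReal) ∂μ := by
    rw [aux_lintegral_atoms hT hC, aux_lintegral_atoms hT hC]
    exact tsum_congr fun c => hAt c
  have hint : Integrable (fun ω => a ω * φ (T ω)) μ := by
    refine ⟨hmeas.aestronglyMeasurable, ?_⟩
    have h2 := hφ.hasFiniteIntegral
    simp only [HasFiniteIntegral, enorm_eq_nnnorm] at h2 ⊢
    rw [h1]; exact h2
  refine ⟨hint, ?_⟩
  rw [aux_integral_atoms hT hC hint, aux_integral_atoms hT hC hφ]
  refine tsum_congr fun c => ?_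
  have hL : ∫ ω in T ⁻¹' {(c : γ)}, a ω * φ (T ω) ∂μ
      = (∫ ω in T ⁻¹' {(c : γ)}, a ω ∂μ) * φ (c : γ) := by
    rw [← integral_mul_const]
    refine setIntegral_congr_fun (hA _) fun ω hω => ?_
    rw [Set.mem_preimage, Set.mem_singleton_iff] at hω
    simp [hω]
  have hR : ∫ ω in T ⁻¹' {(c : γ)}, p (T ω) * φ (T ω) ∂μ
      = p (c : γ) * φ (c : γ) * (μ (T ⁻¹' {(c : γ)})).toReal := by
    rw [setIntegral_congr_fun (hA _) (fun ω hω => ?_), setIntegral_const, smul_eq_mul, mul_comm, measureReal_def]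
    rw [Set.mem_preimage, Set.mem_singleton_iff] at hω
    simp [hω]
  rw [hL, hR, hlaw]
  ring
lemma aux_score_zero (hT : Measurable T) (hC : (Set.range T).Countable)
    {a : Ω → ℝ} (ha : Integrable a μ) {p φ : γ → ℝ}
    (hlaw : ∀ c, ∫ ω in T ⁻¹' {c}, a ω ∂μ = p c * (μ (T ⁻¹' {c})).toReal)
    (hF : Integrable (fun ω => φ (T ω) * (a ω - p (T ω))) μ) :
    ∫ ω, φ (T ω) * (a ω - p (T ω)) ∂μ = 0 := by
  rw [aux_integral_atoms hT hC hF]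
  have hz : ∀ c : Set.range T,
      ∫ ω in T ⁻¹' {(c : γ)}, φ (T ω) * (a ω - p (T ω)) ∂μ = 0 := by
    intro c
    have hA : MeasurableSet (T ⁻¹' {(c : γ)}) := hT (measurableSet_singleton _)
    have he : ∫ ω in T ⁻¹' {(c : γ)}, φ (T ω) * (a ω - p (T ω)) ∂μ
        = ∫ ω in T ⁻¹' {(c : γ)}, (φ (c : γ) * a ω - φ (c : γ) * p (c : γ)) ∂μ := by
      refine setIntegral_congr_fun hA fun ω hω => ?_
      rw [Set.mem_preimage, Set.mem_singleton_iff] at hω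
      rw [hω]; ring
    rw [he, integral_sub (ha.restrict.const_mul _) (integrable_const _),
      integral_const_mul, hlaw, integral_const, measureReal_def, Measure.restrict_apply_univ, smul_eq_mul]
    ring
  rw [tsum_congr hz, tsum_zero]

end Aux

namespace PhiAux
variable {d p1 p2 q w : ℕ} (E : MISetup d p1 p2 q w)

abbrev T1 : E.Ω → ℝ × (Fin p1 → ℝ) × (Fin p2 → ℝ) × ((Fin q → ℝ) × (Fin w → ℝ)) :=
  fun ω => (E.Y 0 ω, E.X1 0 ω, E.X2 0 ω, E.Vv 0 ω)

abbrev T2 : E.Ω → (Fin p1 → ℝ) × (Fin p2 → ℝ) × (Fin q → ℝ) × (Fin w → ℝ) :=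
  fun ω => (E.X1 0 ω, E.X2 0 ω, E.Z 0 ω, E.W 0 ω)

abbrev pf (j : Fin 4) (c : ℝ × (Fin p1 → ℝ) × (Fin p2 → ℝ) × ((Fin q → ℝ) × (Fin w → ℝ))) : ℝ :=
  E.pi j c.1 c.2.2.2

abbrev Sv (j : Fin (d + 1)) (c : ℝ × (Fin p1 → ℝ) × (Fin p2 → ℝ) × ((Fin q → ℝ) × (Fin w → ℝ))) : ℝ :=
  E.cvec c.2.1 c.2.2.1 c.2.2.2.1 j * (c.1 - Hlog (lin E.β₀ (E.cvec c.2.1 c.2.2.1 c.2.2.2.1)))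

end PhiAux

/-- at the true parameter and under MAR, the MI1 influence function has mean
zero, `E[Φ₁(β, π₁)] = 0`; more precisely each of its four constituent terms has mean zero. -/
theorem Phi_mean_zero {d p1 p2 q w : ℕ} (E : MISetup d p1 p2 q w)
    (measY : Measurable (E.Y 0)) (measX1 : Measurable (E.X1 0))
    (measX2 : Measurable (E.X2 0)) (measZ : Measurable (E.Z 0))
    (measW : Measurable (E.W 0)) (measδ : ∀ j, Measurable (E.δ j 0))
    (Ybin : ∀ ω, E.Y 0 ω = 0 ∨ E.Y 0 ω = 1)
    (δbin : ∀ j ω, E.δ j 0 ω = 0 ∨ E.δ j 0 ω = 1)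
    (δsum : ∀ ω, ∑ j : Fin 4, E.δ j 0 ω = 1)
    (intercept : ∀ a b c, E.cvec a b c 0 = 1)
    (disc : Set.Countable (Set.range fun ω => (E.X1 0 ω, E.X2 0 ω, E.Z 0 ω, E.W 0 ω)))
    (pipos : ∀ j y v, 0 < E.pi j y v)
    (pisum : ∀ y v, ∑ j : Fin 4, E.pi j y v = 1)
    (mar : ∀ j,
      MeasureTheory.condExp
          (MeasurableSpace.comap (fun ω => (E.Y 0 ω, E.X1 0 ω, E.X2 0 ω, E.Vv 0 ω))
            inferInstance)
          E.μ (E.δ j 0)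
        =ᵐ[E.μ] fun ω => E.pi j (E.Y 0 ω) (E.Vv 0 ω))
    (model :
      MeasureTheory.condExp
          (MeasurableSpace.comap (fun ω => (E.X1 0 ω, E.X2 0 ω, E.Z 0 ω, E.W 0 ω))
            inferInstance)
          E.μ (E.Y 0)
        =ᵐ[E.μ] fun ω => Hlog (lin E.β₀ (E.XX 0 ω)))
    (hsstar2 : ∀ β j,
      (fun ω => E.sstar2 β (E.Y 0 ω) (E.X2 0 ω) (E.Vv 0 ω) j) =ᵐ[E.μ]
        MeasureTheory.condExp
          (MeasurableSpace.comap (fun ω => (E.Y 0 ω, E.X2 0 ω, E.Vv 0 ω)) inferInstance)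
          E.μ (fun ω => E.S β 0 ω j))
    (hsstar3 : ∀ β j,
      (fun ω => E.sstar3 β (E.Y 0 ω) (E.X1 0 ω) (E.Vv 0 ω) j) =ᵐ[E.μ]
        MeasureTheory.condExp
          (MeasurableSpace.comap (fun ω => (E.Y 0 ω, E.X1 0 ω, E.Vv 0 ω)) inferInstance)
          E.μ (fun ω => E.S β 0 ω j))
    (hsstar4 : ∀ β j,
      (fun ω => E.sstar4 β (E.Y 0 ω) (E.Vv 0 ω) j) =ᵐ[E.μ]
        MeasureTheory.condExp
          (MeasurableSpace.comap (fun ω => (E.Y 0 ω, E.Vv 0 ω)) inferInstance)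
          E.μ (fun ω => E.S β 0 ω j))
    (hint : ∀ j, Integrable (fun ω => E.S E.β₀ 0 ω j) E.μ) :
    (∀ j, ∫ ω, E.Phi E.β₀ 0 ω j ∂E.μ = 0) ∧
    (∀ j, ∫ ω, (E.δ 0 0 ω / E.pi 0 (E.Y 0 ω) (E.Vv 0 ω)) * E.S E.β₀ 0 ω j ∂E.μ = 0) ∧
    (∀ j, ∫ ω,
        (E.δ 1 0 ω - E.δ 0 0 ω * E.pi 1 (E.Y 0 ω) (E.Vv 0 ω) / E.pi 0 (E.Y 0 ω) (E.Vv 0 ω)) *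
          E.sstar2 E.β₀ (E.Y 0 ω) (E.X2 0 ω) (E.Vv 0 ω) j ∂E.μ = 0) ∧
    (∀ j, ∫ ω,
        (E.δ 2 0 ω - E.δ 0 0 ω * E.pi 2 (E.Y 0 ω) (E.Vv 0 ω) / E.pi 0 (E.Y 0 ω) (E.Vv 0 ω)) *
          E.sstar3 E.β₀ (E.Y 0 ω) (E.X1 0 ω) (E.Vv 0 ω) j ∂E.μ = 0) ∧
    (∀ j, ∫ ω,
        (E.δ 3 0 ω - E.δ 0 0 ω * E.pi 3 (E.Y 0 ω) (E.Vv 0 ω) / E.pi 0 (E.Y 0 ω) (E.Vv 0 ω)) *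
          E.sstar4 E.β₀ (E.Y 0 ω) (E.Vv 0 ω) j ∂E.μ = 0) := by
  classical
  have hVv : Measurable (E.Vv 0) := measZ.prodMk measW
  have hT : Measurable (PhiAux.T1 E) :=
    measY.prodMk (measX1.prodMk (measX2.prodMk hVv))
  have hT2 : Measurable (PhiAux.T2 E) :=
    measX1.prodMk (measX2.prodMk (measZ.prodMk measW))
  have hC : (Set.range (PhiAux.T1 E)).Countable := by
    have h1 : Set.range (PhiAux.T1 E) ⊆
        (fun x : ℝ × ((Fin p1 → ℝ) × (Fin p2 → ℝ) × (Fin q → ℝ) × (Fin w → ℝ)) =>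
          (x.1, x.2.1, x.2.2.1, (x.2.2.2.1, x.2.2.2.2))) ''
          (({0, 1} : Set ℝ) ×ˢ Set.range (PhiAux.T2 E)) := by
      rintro _ ⟨ω, rfl⟩
      refine ⟨(E.Y 0 ω, PhiAux.T2 E ω), ⟨?_, ⟨ω, rfl⟩⟩, rfl⟩
      rcases Ybin ω with h | h <;> simp [h]
    exact Set.Countable.mono h1
      ((((Set.countable_singleton (1 : ℝ)).insert 0).prod disc).image _)
  have hδint : ∀ jj : Fin 4, Integrable (E.δ jj 0) E.μ := fun jj =>
    ⟨(measδ jj).aestronglyMeasurable, (hasFiniteIntegral_const (1 : ℝ)).mono'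
      (Filter.Eventually.of_forall fun ω => by rcases δbin jj ω with h | h <;> simp [h])⟩
  have hδ0 : ∀ (jj : Fin 4) ω, 0 ≤ E.δ jj 0 ω := fun jj ω => by
    rcases δbin jj ω with h | h <;> simp [h]
  have hδ1 : ∀ (jj : Fin 4) ω, E.δ jj 0 ω ≤ 1 := fun jj ω => by
    rcases δbin jj ω with h | h <;> simp [h]
  have hppos : ∀ (jj : Fin 4) c, 0 < PhiAux.pf E jj c := fun jj c => pipos jj _ _
  have hple : ∀ (jj : Fin 4) c, PhiAux.pf E jj c ≤ 1 := by
    intro jj c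
    have h := pisum c.1 c.2.2.2
    have h2 := Finset.single_le_sum (f := fun i => E.pi i c.1 c.2.2.2)
      (fun i _ => (pipos i c.1 c.2.2.2).le) (Finset.mem_univ jj)
    rw [h] at h2
    exact h2
  have hlaw : ∀ (jj : Fin 4) c, ∫ ω in PhiAux.T1 E ⁻¹' {c}, E.δ jj 0 ω ∂E.μ
      = PhiAux.pf E jj c * (E.μ (PhiAux.T1 E ⁻¹' {c})).toReal := fun jj c =>
    aux_atom_law (p := PhiAux.pf E jj) hT (hδint jj) (mar jj) c
  -- E[S_j] = 0
  have hYint : Integrable (E.Y 0) E.μ :=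
    ⟨measY.aestronglyMeasurable, (hasFiniteIntegral_const (1 : ℝ)).mono'
      (Filter.Eventually.of_forall fun ω => by rcases Ybin ω with h | h <;> simp [h])⟩
  have hYlaw : ∀ c, ∫ ω in PhiAux.T2 E ⁻¹' {c}, E.Y 0 ω ∂E.μ
      = Hlog (lin E.β₀ (E.cvec c.1 c.2.1 c.2.2.1)) * (E.μ (PhiAux.T2 E ⁻¹' {c})).toReal :=
    fun c => aux_atom_law (p := fun c => Hlog (lin E.β₀ (E.cvec c.1 c.2.1 c.2.2.1)))
      hT2 hYint model c
  have hS0 : ∀ j, ∫ ω, E.S E.β₀ 0 ω j ∂E.μ = 0 := fun j =>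
    aux_score_zero (φ := fun c => E.cvec c.1 c.2.1 c.2.2.1 j) hT2 disc hYint hYlaw (hint j)
  -- term 1
  have hterm1 : ∀ j,
      Integrable (fun ω => E.δ 0 0 ω / E.pi 0 (E.Y 0 ω) (E.Vv 0 ω) * E.S E.β₀ 0 ω j) E.μ ∧
      ∫ ω, E.δ 0 0 ω / E.pi 0 (E.Y 0 ω) (E.Vv 0 ω) * E.S E.β₀ 0 ω j ∂E.μ = 0 := by
    intro j
    have heq : ∀ ω, PhiAux.pf E 0 (PhiAux.T1 E ω) *
        ((fun c => PhiAux.Sv E j c / PhiAux.pf E 0 c) (PhiAux.T1 E ω)) = E.S E.β₀ 0 ω j := by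
      intro ω
      have h0 : PhiAux.pf E 0 (PhiAux.T1 E ω) ≠ 0 := (hppos 0 _).ne'
      have hs : E.S E.β₀ 0 ω j = PhiAux.Sv E j (PhiAux.T1 E ω) := rfl
      rw [hs]
      field_simp
    have hφ : Integrable (fun ω => PhiAux.pf E 0 (PhiAux.T1 E ω) *
        ((fun c => PhiAux.Sv E j c / PhiAux.pf E 0 c) (PhiAux.T1 E ω))) E.μ :=
      (hint j).congr (Filter.Eventually.of_forall fun ω => (heq ω).symm)
    have h1 := aux_master (p := PhiAux.pf E 0) (φ := fun c => PhiAux.Sv E j c / PhiAux.pf E 0 c)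
      hT hC (measδ 0) (hδ0 0) (hδ1 0) (fun c => (hppos 0 c).le) (hlaw 0) hφ
    have hpt : ∀ ω, E.δ 0 0 ω / E.pi 0 (E.Y 0 ω) (E.Vv 0 ω) * E.S E.β₀ 0 ω j
        = E.δ 0 0 ω * ((fun c => PhiAux.Sv E j c / PhiAux.pf E 0 c) (PhiAux.T1 E ω)) := by
      intro ω
      show E.δ 0 0 ω / PhiAux.pf E 0 (PhiAux.T1 E ω) * PhiAux.Sv E j (PhiAux.T1 E ω) = _
      ring
    refine ⟨h1.1.congr (Filter.Eventually.of_forall fun ω => (hpt ω).symm), ?_⟩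
    rw [integral_congr_ae (Filter.Eventually.of_forall hpt), h1.2,
      integral_congr_ae (Filter.Eventually.of_forall heq), hS0 j]
  -- terms 2,3,4
  have termk : ∀ (k : Fin 4)
      (sst : ℝ × (Fin p1 → ℝ) × (Fin p2 → ℝ) × ((Fin q → ℝ) × (Fin w → ℝ)) → ℝ),
      Integrable (fun ω => sst (PhiAux.T1 E ω)) E.μ →
      Integrable (fun ω =>
        (E.δ k 0 ω - E.δ 0 0 ω * E.pi k (E.Y 0 ω) (E.Vv 0 ω) / E.pi 0 (E.Y 0 ω) (E.Vv 0 ω))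
          * sst (PhiAux.T1 E ω)) E.μ ∧
      ∫ ω, (E.δ k 0 ω - E.δ 0 0 ω * E.pi k (E.Y 0 ω) (E.Vv 0 ω) / E.pi 0 (E.Y 0 ω) (E.Vv 0 ω))
          * sst (PhiAux.T1 E ω) ∂E.μ = 0 := by
    intro k sst hsint
    have hφk : Integrable (fun ω => PhiAux.pf E k (PhiAux.T1 E ω) * sst (PhiAux.T1 E ω)) E.μ := by
      refine hsint.abs.mono'
        ((aux_meas_comp hT hC fun c => PhiAux.pf E k c * sst c).aestronglyMeasurable) ?_
      refine Filter.Eventually.of_forall fun ω => ?_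
      rw [Real.norm_eq_abs, abs_mul, abs_of_nonneg (hppos k _).le]
      exact mul_le_of_le_one_left (abs_nonneg _) (hple k _)
    have hi := aux_master (p := PhiAux.pf E k) (φ := sst)
      hT hC (measδ k) (hδ0 k) (hδ1 k) (fun c => (hppos k c).le) (hlaw k) hφk
    have heq0 : ∀ ω, PhiAux.pf E 0 (PhiAux.T1 E ω) *
        ((fun c => PhiAux.pf E k c / PhiAux.pf E 0 c * sst c) (PhiAux.T1 E ω))
        = PhiAux.pf E k (PhiAux.T1 E ω) * sst (PhiAux.T1 E ω) := by
      intro ω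
      have h0 : PhiAux.pf E 0 (PhiAux.T1 E ω) ≠ 0 := (hppos 0 _).ne'
      field_simp
    have hφ0 : Integrable (fun ω => PhiAux.pf E 0 (PhiAux.T1 E ω) *
        ((fun c => PhiAux.pf E k c / PhiAux.pf E 0 c * sst c) (PhiAux.T1 E ω))) E.μ :=
      hφk.congr (Filter.Eventually.of_forall fun ω => (heq0 ω).symm)
    have hii := aux_master (p := PhiAux.pf E 0)
      (φ := fun c => PhiAux.pf E k c / PhiAux.pf E 0 c * sst c)
      hT hC (measδ 0) (hδ0 0) (hδ1 0) (fun c => (hppos 0 c).le) (hlaw 0) hφ0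
    have hdec : ∀ ω,
        (E.δ k 0 ω - E.δ 0 0 ω * E.pi k (E.Y 0 ω) (E.Vv 0 ω) / E.pi 0 (E.Y 0 ω) (E.Vv 0 ω))
          * sst (PhiAux.T1 E ω)
        = E.δ k 0 ω * sst (PhiAux.T1 E ω)
          - E.δ 0 0 ω * ((fun c => PhiAux.pf E k c / PhiAux.pf E 0 c * sst c)
              (PhiAux.T1 E ω)) := by
      intro ω
      show (E.δ k 0 ω - E.δ 0 0 ω * PhiAux.pf E k (PhiAux.T1 E ω)
          / PhiAux.pf E 0 (PhiAux.T1 E ω)) * sst (PhiAux.T1 E ω) = _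
      ring
    refine ⟨(hi.1.sub hii.1).congr (Filter.Eventually.of_forall fun ω => (hdec ω).symm), ?_⟩
    rw [integral_congr_ae (Filter.Eventually.of_forall hdec), integral_sub hi.1 hii.1,
      hi.2, hii.2, integral_congr_ae (Filter.Eventually.of_forall heq0), sub_self]
  have hterm2 : ∀ j, Integrable (fun ω =>
      (E.δ 1 0 ω - E.δ 0 0 ω * E.pi 1 (E.Y 0 ω) (E.Vv 0 ω) / E.pi 0 (E.Y 0 ω) (E.Vv 0 ω))
        * E.sstar2 E.β₀ (E.Y 0 ω) (E.X2 0 ω) (E.Vv 0 ω) j) E.μ ∧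
      ∫ ω, (E.δ 1 0 ω - E.δ 0 0 ω * E.pi 1 (E.Y 0 ω) (E.Vv 0 ω) / E.pi 0 (E.Y 0 ω) (E.Vv 0 ω))
        * E.sstar2 E.β₀ (E.Y 0 ω) (E.X2 0 ω) (E.Vv 0 ω) j ∂E.μ = 0 :=
    fun j => termk 1 (fun c => E.sstar2 E.β₀ c.1 c.2.2.1 c.2.2.2 j)
      (integrable_condExp.congr (hsstar2 E.β₀ j).symm)
  have hterm3 : ∀ j, Integrable (fun ω =>
      (E.δ 2 0 ω - E.δ 0 0 ω * E.pi 2 (E.Y 0 ω) (E.Vv 0 ω) / E.pi 0 (E.Y 0 ω) (E.Vv 0 ω))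
        * E.sstar3 E.β₀ (E.Y 0 ω) (E.X1 0 ω) (E.Vv 0 ω) j) E.μ ∧
      ∫ ω, (E.δ 2 0 ω - E.δ 0 0 ω * E.pi 2 (E.Y 0 ω) (E.Vv 0 ω) / E.pi 0 (E.Y 0 ω) (E.Vv 0 ω))
        * E.sstar3 E.β₀ (E.Y 0 ω) (E.X1 0 ω) (E.Vv 0 ω) j ∂E.μ = 0 :=
    fun j => termk 2 (fun c => E.sstar3 E.β₀ c.1 c.2.1 c.2.2.2 j)
      (integrable_condExp.congr (hsstar3 E.β₀ j).symm)
  have hterm4 : ∀ j, Integrable (fun ω =>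
      (E.δ 3 0 ω - E.δ 0 0 ω * E.pi 3 (E.Y 0 ω) (E.Vv 0 ω) / E.pi 0 (E.Y 0 ω) (E.Vv 0 ω))
        * E.sstar4 E.β₀ (E.Y 0 ω) (E.Vv 0 ω) j) E.μ ∧
      ∫ ω, (E.δ 3 0 ω - E.δ 0 0 ω * E.pi 3 (E.Y 0 ω) (E.Vv 0 ω) / E.pi 0 (E.Y 0 ω) (E.Vv 0 ω))
        * E.sstar4 E.β₀ (E.Y 0 ω) (E.Vv 0 ω) j ∂E.μ = 0 :=
    fun j => termk 3 (fun c => E.sstar4 E.β₀ c.1 c.2.2.2 j)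
      (integrable_condExp.congr (hsstar4 E.β₀ j).symm)
  refine ⟨?_, fun j => (hterm1 j).2, fun j => (hterm2 j).2, fun j => (hterm3 j).2,
    fun j => (hterm4 j).2⟩
  intro j
  have i1 := (hterm1 j).1
  have i2 := (hterm2 j).1
  have i3 := (hterm3 j).1
  have i4 := (hterm4 j).1
  have hexp : (fun ω => E.Phi E.β₀ 0 ω j) = fun ω =>
      E.δ 0 0 ω / E.pi 0 (E.Y 0 ω) (E.Vv 0 ω) * E.S E.β₀ 0 ω j
      + (E.δ 1 0 ω - E.δ 0 0 ω * E.pi 1 (E.Y 0 ω) (E.Vv 0 ω) / E.pi 0 (E.Y 0 ω) (E.Vv 0 ω)) * E.sstar2 E.β₀ (E.Y 0 ω) (E.X2 0 ω) (E.Vv 0 ω) j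
      + (E.δ 2 0 ω - E.δ 0 0 ω * E.pi 2 (E.Y 0 ω) (E.Vv 0 ω) / E.pi 0 (E.Y 0 ω) (E.Vv 0 ω)) * E.sstar3 E.β₀ (E.Y 0 ω) (E.X1 0 ω) (E.Vv 0 ω) j
      + (E.δ 3 0 ω - E.δ 0 0 ω * E.pi 3 (E.Y 0 ω) (E.Vv 0 ω) / E.pi 0 (E.Y 0 ω) (E.Vv 0 ω)) * E.sstar4 E.β₀ (E.Y 0 ω) (E.Vv 0 ω) j := rfl
  have e3 : ∫ ω, (E.δ 0 0 ω / E.pi 0 (E.Y 0 ω) (E.Vv 0 ω) * E.S E.β₀ 0 ω j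
        + (E.δ 1 0 ω - E.δ 0 0 ω * E.pi 1 (E.Y 0 ω) (E.Vv 0 ω) / E.pi 0 (E.Y 0 ω) (E.Vv 0 ω)) * E.sstar2 E.β₀ (E.Y 0 ω) (E.X2 0 ω) (E.Vv 0 ω) j
        + (E.δ 2 0 ω - E.δ 0 0 ω * E.pi 2 (E.Y 0 ω) (E.Vv 0 ω) / E.pi 0 (E.Y 0 ω) (E.Vv 0 ω)) * E.sstar3 E.β₀ (E.Y 0 ω) (E.X1 0 ω) (E.Vv 0 ω) j
        + (E.δ 3 0 ω - E.δ 0 0 ω * E.pi 3 (E.Y 0 ω) (E.Vv 0 ω) / E.pi 0 (E.Y 0 ω) (E.Vv 0 ω)) * E.sstar4 E.β₀ (E.Y 0 ω) (E.Vv 0 ω) j) ∂E.μ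
      = ∫ ω, (E.δ 0 0 ω / E.pi 0 (E.Y 0 ω) (E.Vv 0 ω) * E.S E.β₀ 0 ω j
        + (E.δ 1 0 ω - E.δ 0 0 ω * E.pi 1 (E.Y 0 ω) (E.Vv 0 ω) / E.pi 0 (E.Y 0 ω) (E.Vv 0 ω)) * E.sstar2 E.β₀ (E.Y 0 ω) (E.X2 0 ω) (E.Vv 0 ω) j
        + (E.δ 2 0 ω - E.δ 0 0 ω * E.pi 2 (E.Y 0 ω) (E.Vv 0 ω) / E.pi 0 (E.Y 0 ω) (E.Vv 0 ω)) * E.sstar3 E.β₀ (E.Y 0 ω) (E.X1 0 ω) (E.Vv 0 ω) j) ∂E.μ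
        + ∫ ω, (E.δ 3 0 ω - E.δ 0 0 ω * E.pi 3 (E.Y 0 ω) (E.Vv 0 ω) / E.pi 0 (E.Y 0 ω) (E.Vv 0 ω)) * E.sstar4 E.β₀ (E.Y 0 ω) (E.Vv 0 ω) j ∂E.μ := integral_add ((i1.add i2).add i3) i4
  have e2 : ∫ ω, (E.δ 0 0 ω / E.pi 0 (E.Y 0 ω) (E.Vv 0 ω) * E.S E.β₀ 0 ω j
        + (E.δ 1 0 ω - E.δ 0 0 ω * E.pi 1 (E.Y 0 ω) (E.Vv 0 ω) / E.pi 0 (E.Y 0 ω) (E.Vv 0 ω)) * E.sstar2 E.β₀ (E.Y 0 ω) (E.X2 0 ω) (E.Vv 0 ω) j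
        + (E.δ 2 0 ω - E.δ 0 0 ω * E.pi 2 (E.Y 0 ω) (E.Vv 0 ω) / E.pi 0 (E.Y 0 ω) (E.Vv 0 ω)) * E.sstar3 E.β₀ (E.Y 0 ω) (E.X1 0 ω) (E.Vv 0 ω) j) ∂E.μ
      = ∫ ω, (E.δ 0 0 ω / E.pi 0 (E.Y 0 ω) (E.Vv 0 ω) * E.S E.β₀ 0 ω j
        + (E.δ 1 0 ω - E.δ 0 0 ω * E.pi 1 (E.Y 0 ω) (E.Vv 0 ω) / E.pi 0 (E.Y 0 ω) (E.Vv 0 ω)) * E.sstar2 E.β₀ (E.Y 0 ω) (E.X2 0 ω) (E.Vv 0 ω) j) ∂E.μ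
        + ∫ ω, (E.δ 2 0 ω - E.δ 0 0 ω * E.pi 2 (E.Y 0 ω) (E.Vv 0 ω) / E.pi 0 (E.Y 0 ω) (E.Vv 0 ω)) * E.sstar3 E.β₀ (E.Y 0 ω) (E.X1 0 ω) (E.Vv 0 ω) j ∂E.μ := integral_add (i1.add i2) i3
  have e1 : ∫ ω, (E.δ 0 0 ω / E.pi 0 (E.Y 0 ω) (E.Vv 0 ω) * E.S E.β₀ 0 ω j
        + (E.δ 1 0 ω - E.δ 0 0 ω * E.pi 1 (E.Y 0 ω) (E.Vv 0 ω) / E.pi 0 (E.Y 0 ω) (E.Vv 0 ω)) * E.sstar2 E.β₀ (E.Y 0 ω) (E.X2 0 ω) (E.Vv 0 ω) j) ∂E.μ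
      = ∫ ω, E.δ 0 0 ω / E.pi 0 (E.Y 0 ω) (E.Vv 0 ω) * E.S E.β₀ 0 ω j ∂E.μ
        + ∫ ω, (E.δ 1 0 ω - E.δ 0 0 ω * E.pi 1 (E.Y 0 ω) (E.Vv 0 ω) / E.pi 0 (E.Y 0 ω) (E.Vv 0 ω)) * E.sstar2 E.β₀ (E.Y 0 ω) (E.X2 0 ω) (E.Vv 0 ω) j ∂E.μ := integral_add i1 i2
  rw [hexp, e3, e2, e1, (hterm1 j).2, (hterm2 j).2, (hterm3 j).2, (hterm4 j).2]
  norm_num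
end
end

section
/- At the true parameter β of the logistic regression model and under the MAR assumption, the MI2 influence function has mean zero: E[Ψ₁(β,π₁)] = 0. -/
noncomputable section

open MeasureTheory ProbabilityTheory Filter Finset

open MeasureTheory ProbabilityTheory Filter Finset

/-!
Condition on the fully observed data `(Y, X̃₁, X̃₂, V)`. By MAR, the conditional probability that
the missingness pattern lies in a set `A` of patterns is `∑_{k ∈ A} πₖ(Y, V)`, so a summand
`1{pattern ∈ A} / P(pattern ∈ A | Y, V) · f(Y, X̃, V)` has the mean of `f` (inverse probability
weighting). `Ψ₁` splits into four such summands, for `A = {1}, {1,3}, {1,2}, {2,3,4}` in the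
paper's numbering, whose `f`s add up to `S₁(β)`; and `E[S₁(β₀)] = 0` because
`E[Y − H(β₀ᵀ𝒳) | X̃, Z, W] = 0` under the model. The weights `1/π` are unbounded, so the
integrability of these summands is also obtained by conditioning, through the Lebesgue
conditional expectation of the nonnegative indicators.
-/

section CondExp

open scoped ENNReal

variable {Ω : Type*} {m m0 : MeasurableSpace Ω} {μ : Measure[m0] Ω}

theorem measurable_comap_comp_of_countable_range {α β : Type*} [MeasurableSpace α]
    [MeasurableSingletonClass α] [MeasurableSpace β] {φ : Ω → α}
    (hφ : (Set.range φ).Countable) (g : α → β) :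
    Measurable[MeasurableSpace.comap φ inferInstance] fun ω => g (φ ω) := by
  intro s _
  refine ⟨g ⁻¹' s ∩ Set.range φ, (hφ.mono Set.inter_subset_right).measurableSet, ?_⟩
  ext ω
  simp

theorem lintegral_mul_condLExp (hm : m ≤ m0) [SigmaFinite (μ.trim hm)] {F X : Ω → ℝ≥0∞}
    (hF : Measurable[m] F) (hX : AEMeasurable X μ) :
    ∫⁻ ω, F ω * X ω ∂μ = ∫⁻ ω, F ω * μ⁻[X|m] ω ∂μ := by
  have hXc : AEMeasurable (μ⁻[X|m]) μ :=
    ((measurable_condLExp m μ X).mono hm le_rfl).aemeasurable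
  refine @Measurable.ennreal_induction Ω m
    (fun F => ∫⁻ ω, F ω * X ω ∂μ = ∫⁻ ω, F ω * μ⁻[X|m] ω ∂μ) ?_ ?_ ?_ F hF
  · intro c s hs
    simp only [← Set.indicator_mul_left, lintegral_indicator (hm s hs),
      lintegral_const_mul'' _ hX.restrict, lintegral_const_mul'' _ hXc.restrict,
      setLIntegral_condLExp hm μ X hs]
  · intro f g _ hf _ ihf ihg
    simp only [Pi.add_apply, add_mul]
    rw [lintegral_add_left' (f := fun ω => f ω * X ω) ((hf.mono hm le_rfl).aemeasurable.mul hX),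
      lintegral_add_left' (f := fun ω => f ω * μ⁻[X|m] ω)
        ((hf.mono hm le_rfl).aemeasurable.mul hXc), ihf, ihg]
  · intro f hf hmono ih
    simp only [ENNReal.iSup_mul]
    rw [lintegral_iSup' (f := fun n ω => f n ω * X ω)
        (fun n => ((hf n).mono hm le_rfl).aemeasurable.mul hX)
        (.of_forall fun ω n k hnk => mul_le_mul_left (hmono hnk ω) _),
      lintegral_iSup' (f := fun n ω => f n ω * μ⁻[X|m] ω)
        (fun n => ((hf n).mono hm le_rfl).aemeasurable.mul hXc)
        (.of_forall fun ω n k hnk => mul_le_mul_left (hmono hnk ω) _)]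
    simp_rw [ih]

variable {f g : Ω → ℝ}

theorem integrable_mul_of_integrable_mul_condExp (hm : m ≤ m0) [SigmaFinite (μ.trim hm)]
    (hf : StronglyMeasurable[m] f) (hg0 : 0 ≤ᵐ[μ] g) (hg : Integrable g μ)
    (hfg : Integrable (fun ω => f ω * μ[g|m] ω) μ) :
    Integrable (fun ω => f ω * g ω) μ := by
  refine ⟨(hf.mono hm).aestronglyMeasurable.mul hg.1, ?_⟩
  calc ∫⁻ ω, ‖f ω * g ω‖ₑ ∂μ = ∫⁻ ω, ‖f ω‖ₑ * ENNReal.ofReal (g ω) ∂μ := by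
        refine lintegral_congr_ae (hg0.mono fun ω hω => ?_)
        dsimp only
        rw [enorm_mul, Real.enorm_of_nonneg hω]
    _ = ∫⁻ ω, ‖f ω‖ₑ * μ⁻[fun ω => ENNReal.ofReal (g ω)|m] ω ∂μ :=
        lintegral_mul_condLExp hm (measurable_enorm.comp hf.measurable)
          hg.1.aemeasurable.ennreal_ofReal
    _ = ∫⁻ ω, ‖f ω * μ[g|m] ω‖ₑ ∂μ := by
        refine lintegral_congr_ae ?_
        filter_upwards [condLExp_ofReal m hg hg0, condExp_nonneg hg0 (m := m)] with ω h1 h2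
        rw [h1, enorm_mul, Real.enorm_of_nonneg h2]
    _ < ∞ := hfg.2

theorem integral_mul_condExp (hm : m ≤ m0) [SigmaFinite (μ.trim hm)]
    (hf : StronglyMeasurable[m] f) (hg : Integrable g μ)
    (hfg : Integrable (fun ω => f ω * g ω) μ) :
    ∫ ω, f ω * g ω ∂μ = ∫ ω, f ω * μ[g|m] ω ∂μ := by
  rw [← integral_condExp hm]
  exact integral_congr_ae (condExp_mul_of_stronglyMeasurable_left hf hfg hg)

theorem integral_div_condExp_mul {q : Ω → ℝ} (hm : m ≤ m0) [SigmaFinite (μ.trim hm)]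
    (hg0 : 0 ≤ᵐ[μ] g) (hg : Integrable g μ) (hgq : μ[g|m] =ᵐ[μ] q)
    (hq : StronglyMeasurable[m] q) (hq0 : ∀ ω, q ω ≠ 0)
    (hf : StronglyMeasurable[m] f) (hfi : Integrable f μ) :
    Integrable (fun ω => g ω / q ω * f ω) μ ∧ ∫ ω, g ω / q ω * f ω ∂μ = ∫ ω, f ω ∂μ := by
  have hfq : StronglyMeasurable[m] fun ω => f ω / q ω :=
    (hf.measurable.div hq.measurable).stronglyMeasurable
  have hcancel : (fun ω => f ω / q ω * μ[g|m] ω) =ᵐ[μ] f :=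
    hgq.mono fun ω hω => by dsimp only; rw [hω]; field_simp [hq0 ω]
  have hint : Integrable (fun ω => f ω / q ω * g ω) μ :=
    integrable_mul_of_integrable_mul_condExp hm hfq hg0 hg (hfi.congr hcancel.symm)
  have hcomm : (fun ω => g ω / q ω * f ω) = fun ω => f ω / q ω * g ω := by
    ext ω; ring
  rw [hcomm]
  exact ⟨hint, (integral_mul_condExp hm hfq hg hint).trans (integral_congr_ae hcancel)⟩

end CondExp

section MissingPatterns

variable {Ω : Type*} {m m0 : MeasurableSpace Ω} {μ : Measure[m0] Ω} [IsFiniteMeasure μ]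

theorem integral_sum_div_sum_mul {ι : Type*} {δ π : ι → Ω → ℝ} {f : Ω → ℝ} (hm : m ≤ m0)
    (hδ0 : ∀ k ω, 0 ≤ δ k ω) (hδ : ∀ k, Integrable (δ k) μ) (hδπ : ∀ k, μ[δ k|m] =ᵐ[μ] π k)
    (hπ : ∀ k, StronglyMeasurable[m] (π k)) (hπ0 : ∀ k ω, 0 < π k ω)
    {A : Finset ι} (hA : A.Nonempty) (hf : StronglyMeasurable[m] f) (hfi : Integrable f μ) :
    Integrable (fun ω => (∑ k ∈ A, δ k ω) / (∑ k ∈ A, π k ω) * f ω) μ ∧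
      ∫ ω, (∑ k ∈ A, δ k ω) / (∑ k ∈ A, π k ω) * f ω ∂μ = ∫ ω, f ω ∂μ := by
  refine integral_div_condExp_mul hm (.of_forall fun ω => A.sum_nonneg fun k _ => hδ0 k ω)
    (integrable_finsetSum A fun k _ => hδ k) ?_
    (A.stronglyMeasurable_fun_sum fun k _ => hπ k)
    (fun ω => (A.sum_pos (fun k _ => hπ0 k ω) hA).ne') hf hfi
  have hsum : μ[fun ω => ∑ k ∈ A, δ k ω|m] =ᵐ[μ] fun ω => ∑ k ∈ A, μ[δ k|m] ω := by
    simpa only [Finset.sum_fn] using condExp_finsetSum (fun k _ => hδ k) m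
  filter_upwards [hsum, (Filter.eventually_all_finset A).2 fun k _ => hδπ k] with ω h1 h2
  exact h1.trans (Finset.sum_congr rfl h2)

theorem mi2_integrand_eq_sum_ipw {δ π : Fin 4 → ℝ} (hπ : ∀ k, 0 < π k) (s t : ℝ) :
    δ 0 * s + (δ 1 + δ 2 + δ 3) * t
      + ((δ 0 + δ 2) * π 1 / (π 0 + π 2) + (δ 0 + δ 1) * π 2 / (π 0 + π 1)
        + δ 0 * π 3 / π 0) * (s - t)
    = δ 0 / π 0 * (π 0 * s + π 3 * (s - t)) + (δ 0 + δ 2) / (π 0 + π 2) * (π 1 * (s - t))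
      + (δ 0 + δ 1) / (π 0 + π 1) * (π 2 * (s - t))
      + (δ 1 + δ 2 + δ 3) / (π 1 + π 2 + π 3) * (π 1 * t + π 2 * t + π 3 * t) := by
  have := hπ 0; have := hπ 1; have := hπ 2; have := hπ 3
  field_simp
  ring

theorem integral_mi2_eq_integral {δ π : Fin 4 → Ω → ℝ} {S T : Ω → ℝ} (hm : m ≤ m0)
    (hδ0 : ∀ k ω, 0 ≤ δ k ω) (hδ : ∀ k, Integrable (δ k) μ) (hδπ : ∀ k, μ[δ k|m] =ᵐ[μ] π k)
    (hπ : ∀ k, StronglyMeasurable[m] (π k)) (hπ0 : ∀ k ω, 0 < π k ω)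
    (hπ1 : ∀ ω, ∑ k, π k ω = 1) (hS : StronglyMeasurable[m] S) (hT : StronglyMeasurable[m] T)
    (hSi : Integrable S μ) (hTi : Integrable T μ) :
    ∫ ω, (δ 0 ω * S ω + (δ 1 ω + δ 2 ω + δ 3 ω) * T ω
      + ((δ 0 ω + δ 2 ω) * π 1 ω / (π 0 ω + π 2 ω) + (δ 0 ω + δ 1 ω) * π 2 ω / (π 0 ω + π 1 ω)
        + δ 0 ω * π 3 ω / π 0 ω) * (S ω - T ω)) ∂μ = ∫ ω, S ω ∂μ := by
  have hπ1' : ∀ ω, π 0 ω + π 1 ω + π 2 ω + π 3 ω = 1 := fun ω => by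
    simpa only [Fin.sum_univ_four] using hπ1 ω
  have hπF : ∀ k {F : Ω → ℝ}, Integrable F μ → Integrable (fun ω => π k ω * F ω) μ :=
    fun k F hF => hF.bdd_mul (c := 1) ((hπ k).mono hm).aestronglyMeasurable (.of_forall fun ω => by
      rw [Real.norm_of_nonneg (hπ0 k ω).le, ← hπ1 ω]
      exact Finset.single_le_sum (fun j _ => (hπ0 j ω).le) (Finset.mem_univ k))
  have hR : StronglyMeasurable[m] fun ω => S ω - T ω := hS.sub hT
  have hRi : Integrable (fun ω => S ω - T ω) μ := hSi.sub hTi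
  have ipw := fun (A : Finset (Fin 4)) (hA : A.Nonempty) {f : Ω → ℝ} =>
    integral_sum_div_sum_mul (f := f) hm hδ0 hδ hδπ hπ hπ0 hA
  have j₀ : Integrable (fun ω => π 0 ω * S ω + π 3 ω * (S ω - T ω)) μ :=
    (hπF 0 hSi).add (hπF 3 hRi)
  have j₁ : Integrable (fun ω => π 1 ω * (S ω - T ω)) μ := hπF 1 hRi
  have j₂ : Integrable (fun ω => π 2 ω * (S ω - T ω)) μ := hπF 2 hRi
  have j₃ : Integrable (fun ω => π 1 ω * T ω + π 2 ω * T ω + π 3 ω * T ω) μ :=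
    ((hπF 1 hTi).add (hπF 2 hTi)).add (hπF 3 hTi)
  obtain ⟨i₀, e₀⟩ := ipw {0} (Finset.singleton_nonempty _)
    (((hπ 0).mul hS).add ((hπ 3).mul hR)) j₀
  obtain ⟨i₁, e₁⟩ := ipw {0, 2} (Finset.insert_nonempty _ _) ((hπ 1).mul hR) j₁
  obtain ⟨i₂, e₂⟩ := ipw {0, 1} (Finset.insert_nonempty _ _) ((hπ 2).mul hR) j₂
  obtain ⟨i₃, e₃⟩ := ipw {1, 2, 3} (Finset.insert_nonempty _ _)
    ((((hπ 1).mul hT).add ((hπ 2).mul hT)).add ((hπ 3).mul hT)) j₃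
  simp only [Finset.sum_insert, Finset.mem_insert, Finset.mem_singleton, Fin.reduceEq, or_self,
    not_false_eq_true, Finset.sum_singleton, ← add_assoc, Pi.add_apply,
    Pi.mul_apply] at i₀ e₀ i₁ e₁ i₂ e₂ i₃ e₃
  calc _ = ∫ ω, (δ 0 ω / π 0 ω * (π 0 ω * S ω + π 3 ω * (S ω - T ω))
        + (δ 0 ω + δ 2 ω) / (π 0 ω + π 2 ω) * (π 1 ω * (S ω - T ω))
        + (δ 0 ω + δ 1 ω) / (π 0 ω + π 1 ω) * (π 2 ω * (S ω - T ω))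
        + (δ 1 ω + δ 2 ω + δ 3 ω) / (π 1 ω + π 2 ω + π 3 ω)
          * (π 1 ω * T ω + π 2 ω * T ω + π 3 ω * T ω)) ∂μ :=
        integral_congr_ae (.of_forall fun ω =>
          mi2_integrand_eq_sum_ipw (δ := (δ · ω)) (fun k => hπ0 k ω) (S ω) (T ω))
    _ = ∫ ω, (π 0 ω * S ω + π 3 ω * (S ω - T ω) + π 1 ω * (S ω - T ω) + π 2 ω * (S ω - T ω)
        + (π 1 ω * T ω + π 2 ω * T ω + π 3 ω * T ω)) ∂μ := by
        rw [integral_add (by fun_prop) i₃, integral_add (by fun_prop) i₂, integral_add i₀ i₁,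
          integral_add (by fun_prop) j₃, integral_add (by fun_prop) j₂, integral_add j₀ j₁,
          e₀, e₁, e₂, e₃]
    _ = ∫ ω, S ω ∂μ := by
        refine integral_congr_ae (.of_forall fun ω => ?_)
        linear_combination S ω * hπ1' ω

end MissingPatterns

theorem norm_Hlog_le_one (u : ℝ) : ‖Hlog u‖ ≤ 1 := by
  unfold Hlog
  rw [Real.norm_of_nonneg (by positivity)]
  exact inv_le_one_of_one_le₀ (le_add_of_nonneg_right (Real.exp_pos _).le)

theorem integrable_of_forall_eq_zero_or_eq_one {Ω : Type*} {mΩ : MeasurableSpace Ω} {μ : Measure Ω}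
    [IsFiniteMeasure μ] {f : Ω → ℝ} (hf : Measurable f) (h01 : ∀ ω, f ω = 0 ∨ f ω = 1) :
    Integrable f μ :=
  .of_bound hf.aestronglyMeasurable 1 (.of_forall fun ω => by rcases h01 ω with h | h <;> simp [h])

namespace MISetup

variable {d p1 p2 q w : ℕ} (E : MISetup d p1 p2 q w)

theorem countable_range_obs (Ybin : ∀ ω, E.Y 0 ω = 0 ∨ E.Y 0 ω = 1)
    (disc : Set.Countable (Set.range fun ω => (E.X1 0 ω, E.X2 0 ω, E.Z 0 ω, E.W 0 ω))) :
    (Set.range fun ω => (E.Y 0 ω, E.X1 0 ω, E.X2 0 ω, E.Vv 0 ω)).Countable := by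
  refine (((Set.countable_singleton (1 : ℝ)).insert 0).prod disc).image
    (fun x => (x.1, x.2.1, x.2.2.1, x.2.2.2)) |>.mono ?_
  rintro _ ⟨ω, rfl⟩
  exact ⟨(E.Y 0 ω, E.X1 0 ω, E.X2 0 ω, E.Z 0 ω, E.W 0 ω), ⟨Ybin ω, ω, rfl⟩, rfl⟩

theorem integral_S_eq_zero (measY : Measurable (E.Y 0)) (measX1 : Measurable (E.X1 0))
    (measX2 : Measurable (E.X2 0)) (measZ : Measurable (E.Z 0)) (measW : Measurable (E.W 0))
    (Ybin : ∀ ω, E.Y 0 ω = 0 ∨ E.Y 0 ω = 1)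
    (disc : Set.Countable (Set.range fun ω => (E.X1 0 ω, E.X2 0 ω, E.Z 0 ω, E.W 0 ω)))
    (model :
      MeasureTheory.condExp
          (MeasurableSpace.comap (fun ω => (E.X1 0 ω, E.X2 0 ω, E.Z 0 ω, E.W 0 ω))
            inferInstance)
          E.μ (E.Y 0)
        =ᵐ[E.μ] fun ω => Hlog (lin E.β₀ (E.XX 0 ω)))
    {j : Fin (d + 1)} (hint : Integrable (fun ω => E.S E.β₀ 0 ω j) E.μ) :
    ∫ ω, E.S E.β₀ 0 ω j ∂E.μ = 0 := by
  set mX := MeasurableSpace.comap (fun ω => (E.X1 0 ω, E.X2 0 ω, E.Z 0 ω, E.W 0 ω))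
    inferInstance
  have hm : mX ≤ E.mΩ := (measX1.prodMk (measX2.prodMk (measZ.prodMk measW))).comap_le
  have hX : StronglyMeasurable[mX] fun ω => E.XX 0 ω j :=
    (measurable_comap_comp_of_countable_range disc
      fun t => E.cvec t.1 t.2.1 t.2.2.1 j).stronglyMeasurable
  have hH : StronglyMeasurable[mX] fun ω => Hlog (lin E.β₀ (E.XX 0 ω)) :=
    (measurable_comap_comp_of_countable_range disc
      fun t => Hlog (lin E.β₀ (E.cvec t.1 t.2.1 t.2.2.1))).stronglyMeasurable
  have hHi : Integrable (fun ω => Hlog (lin E.β₀ (E.XX 0 ω))) E.μ :=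
    .of_bound (hH.mono hm).aestronglyMeasurable 1 (.of_forall fun _ => norm_Hlog_le_one _)
  have hYi : Integrable (E.Y 0) E.μ := integrable_of_forall_eq_zero_or_eq_one measY Ybin
  have hresid : E.μ[fun ω => E.Y 0 ω - Hlog (lin E.β₀ (E.XX 0 ω))|mX] =ᵐ[E.μ] 0 := by
    refine (condExp_sub hYi hHi _).trans ?_
    rw [condExp_of_stronglyMeasurable hm hH hHi]
    filter_upwards [model] with ω hω
    simp [hω]
  calc ∫ ω, E.S E.β₀ 0 ω j ∂E.μ
      = ∫ ω, E.XX 0 ω j * E.μ[fun ω => E.Y 0 ω - Hlog (lin E.β₀ (E.XX 0 ω))|mX] ω ∂E.μ :=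
        integral_mul_condExp hm hX (hYi.sub hHi) hint
    _ = ∫ ω, E.XX 0 ω j * (0 : E.Ω → ℝ) ω ∂E.μ := integral_congr_ae (EventuallyEq.rfl.mul hresid)
    _ = 0 := by simp

theorem integral_Psi_eq_integral_S (measY : Measurable (E.Y 0)) (measX1 : Measurable (E.X1 0))
    (measX2 : Measurable (E.X2 0)) (measZ : Measurable (E.Z 0))
    (measW : Measurable (E.W 0)) (measδ : ∀ j, Measurable (E.δ j 0))
    (Ybin : ∀ ω, E.Y 0 ω = 0 ∨ E.Y 0 ω = 1)
    (δbin : ∀ j ω, E.δ j 0 ω = 0 ∨ E.δ j 0 ω = 1)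
    (disc : Set.Countable (Set.range fun ω => (E.X1 0 ω, E.X2 0 ω, E.Z 0 ω, E.W 0 ω)))
    (pipos : ∀ j y v, 0 < E.pi j y v)
    (pisum : ∀ y v, ∑ j : Fin 4, E.pi j y v = 1)
    (mar : ∀ j,
      MeasureTheory.condExp
          (MeasurableSpace.comap (fun ω => (E.Y 0 ω, E.X1 0 ω, E.X2 0 ω, E.Vv 0 ω))
            inferInstance)
          E.μ (E.δ j 0)
        =ᵐ[E.μ] fun ω => E.pi j (E.Y 0 ω) (E.Vv 0 ω))
    {β : Fin (d + 1) → ℝ} {j : Fin (d + 1)} (hS : Integrable (fun ω => E.S β 0 ω j) E.μ)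
    (hT : Integrable (fun ω => E.sstar4 β (E.Y 0 ω) (E.Vv 0 ω) j) E.μ) :
    ∫ ω, E.Psi β 0 ω j ∂E.μ = ∫ ω, E.S β 0 ω j ∂E.μ := by
  have hobs := fun g : _ → ℝ =>
    measurable_comap_comp_of_countable_range (E.countable_range_obs Ybin disc) g
  exact integral_mi2_eq_integral
    (measY.prodMk (measX1.prodMk (measX2.prodMk (measZ.prodMk measW)))).comap_le
    (fun k ω => by rcases δbin k ω with h | h <;> simp [h])
    (fun k => integrable_of_forall_eq_zero_or_eq_one (measδ k) (δbin k)) mar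
    (fun k => (hobs fun t => E.pi k t.1 t.2.2.2).stronglyMeasurable) (fun k _ => pipos k _ _)
    (fun _ => pisum _ _)
    (hobs fun t => E.cvec t.2.1 t.2.2.1 t.2.2.2.1 j *
      (t.1 - Hlog (lin β (E.cvec t.2.1 t.2.2.1 t.2.2.2.1)))).stronglyMeasurable
    (hobs fun t => E.sstar4 β t.1 t.2.2.2 j).stronglyMeasurable hS hT

end MISetup

theorem Psi_mean_zero_general {d p1 p2 q w : ℕ} (E : MISetup d p1 p2 q w)
    (measY : Measurable (E.Y 0)) (measX1 : Measurable (E.X1 0))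
    (measX2 : Measurable (E.X2 0)) (measZ : Measurable (E.Z 0))
    (measW : Measurable (E.W 0)) (measδ : ∀ j, Measurable (E.δ j 0))
    (Ybin : ∀ ω, E.Y 0 ω = 0 ∨ E.Y 0 ω = 1)
    (δbin : ∀ j ω, E.δ j 0 ω = 0 ∨ E.δ j 0 ω = 1)
    (disc : Set.Countable (Set.range fun ω => (E.X1 0 ω, E.X2 0 ω, E.Z 0 ω, E.W 0 ω)))
    (pipos : ∀ j y v, 0 < E.pi j y v)
    (pisum : ∀ y v, ∑ j : Fin 4, E.pi j y v = 1)
    (mar : ∀ j,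
      MeasureTheory.condExp
          (MeasurableSpace.comap (fun ω => (E.Y 0 ω, E.X1 0 ω, E.X2 0 ω, E.Vv 0 ω))
            inferInstance)
          E.μ (E.δ j 0)
        =ᵐ[E.μ] fun ω => E.pi j (E.Y 0 ω) (E.Vv 0 ω))
    (model :
      MeasureTheory.condExp
          (MeasurableSpace.comap (fun ω => (E.X1 0 ω, E.X2 0 ω, E.Z 0 ω, E.W 0 ω))
            inferInstance)
          E.μ (E.Y 0)
        =ᵐ[E.μ] fun ω => Hlog (lin E.β₀ (E.XX 0 ω)))
    (hsstar4 : ∀ β j,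
      (fun ω => E.sstar4 β (E.Y 0 ω) (E.Vv 0 ω) j) =ᵐ[E.μ]
        MeasureTheory.condExp
          (MeasurableSpace.comap (fun ω => (E.Y 0 ω, E.Vv 0 ω)) inferInstance)
          E.μ (fun ω => E.S β 0 ω j))
    (hint : ∀ j, Integrable (fun ω => E.S E.β₀ 0 ω j) E.μ) :
    ∀ j, ∫ ω, E.Psi E.β₀ 0 ω j ∂E.μ = 0 := by
  intro j
  rw [E.integral_Psi_eq_integral_S measY measX1 measX2 measZ measW measδ Ybin δbin disc pipos
    pisum mar (hint j) (integrable_condExp.congr (hsstar4 E.β₀ j).symm)]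
  exact E.integral_S_eq_zero measY measX1 measX2 measZ measW Ybin disc model (hint j)

/-- at the true parameter and under MAR, the MI2 influence function has mean
zero: `E[Ψ₁(β, π₁)] = 0`. -/
theorem Psi_mean_zero {d p1 p2 q w : ℕ} (E : MISetup d p1 p2 q w)
    (measY : Measurable (E.Y 0)) (measX1 : Measurable (E.X1 0))
    (measX2 : Measurable (E.X2 0)) (measZ : Measurable (E.Z 0))
    (measW : Measurable (E.W 0)) (measδ : ∀ j, Measurable (E.δ j 0))
    (Ybin : ∀ ω, E.Y 0 ω = 0 ∨ E.Y 0 ω = 1)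
    (δbin : ∀ j ω, E.δ j 0 ω = 0 ∨ E.δ j 0 ω = 1)
    (δsum : ∀ ω, ∑ j : Fin 4, E.δ j 0 ω = 1)
    (intercept : ∀ a b c, E.cvec a b c 0 = 1)
    (disc : Set.Countable (Set.range fun ω => (E.X1 0 ω, E.X2 0 ω, E.Z 0 ω, E.W 0 ω)))
    (pipos : ∀ j y v, 0 < E.pi j y v)
    (pisum : ∀ y v, ∑ j : Fin 4, E.pi j y v = 1)
    (mar : ∀ j,
      MeasureTheory.condExp
          (MeasurableSpace.comap (fun ω => (E.Y 0 ω, E.X1 0 ω, E.X2 0 ω, E.Vv 0 ω))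
            inferInstance)
          E.μ (E.δ j 0)
        =ᵐ[E.μ] fun ω => E.pi j (E.Y 0 ω) (E.Vv 0 ω))
    (model :
      MeasureTheory.condExp
          (MeasurableSpace.comap (fun ω => (E.X1 0 ω, E.X2 0 ω, E.Z 0 ω, E.W 0 ω))
            inferInstance)
          E.μ (E.Y 0)
        =ᵐ[E.μ] fun ω => Hlog (lin E.β₀ (E.XX 0 ω)))
    (hsstar4 : ∀ β j,
      (fun ω => E.sstar4 β (E.Y 0 ω) (E.Vv 0 ω) j) =ᵐ[E.μ]
        MeasureTheory.condExp
          (MeasurableSpace.comap (fun ω => (E.Y 0 ω, E.Vv 0 ω)) inferInstance)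
          E.μ (fun ω => E.S β 0 ω j))
    (hint : ∀ j, Integrable (fun ω => E.S E.β₀ 0 ω j) E.μ) :
    ∀ j, ∫ ω, E.Psi E.β₀ 0 ω j ∂E.μ = 0 :=
  Psi_mean_zero_general E measY measX1 measX2 measZ measW measδ Ybin δbin disc pipos pisum mar model
    hsstar4 hint
end
end

section
/- Degenerate-case reduction of the MI2 influence function: suppose the four missingness indicators satisfy δᵢ₁ + δᵢ₂ + δᵢ₃ + δᵢ₄ = 1 with δᵢ₂ = δᵢ₃ = 0, and the selection probabilities satisfy π₂(Yᵢ,Vᵢ) = π₃(Yᵢ,Vᵢ) = 0, π₄(Yᵢ,Vᵢ) = 1 − π₁(Yᵢ,Vᵢ), and π₁(Yᵢ,Vᵢ) ≠ 0. Then Ψᵢ(β,πᵢ) = [δᵢ₁/π₁(Yᵢ,Vᵢ)] Sᵢ(β) + [1 − δᵢ₁/π₁(Yᵢ,Vᵢ)] S*ᵢ(β), i.e. the MI2 influence function reduces exactly to the augmented inverse-probability-weighted form of Wang and Chen (2001) when the two covariate blocks can only be missing simultaneously. -/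
theorem MI2_influence_degenerate_general {V : Type*} [AddCommGroup V] [Module ℝ V]
    (S Sstar : V) (δ1 δ2 δ3 δ4 : ℝ) (π1 π2 π3 π4 : ℝ)
    (hδsum : δ1 + δ2 + δ3 + δ4 = 1)
    (hπ2 : π2 = 0) (hπ3 : π3 = 0) (hπ4 : π4 = 1 - π1) (hπ1 : π1 ≠ 0) :
    δ1 • S + (δ2 + δ3 + δ4) • Sstar
        + ((δ1 + δ3) * π2 / (π1 + π3) + (δ1 + δ2) * π3 / (π1 + π2) + δ1 * π4 / π1) •
            (S - Sstar)
      = (δ1 / π1) • S + (1 - δ1 / π1) • Sstar := by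
  subst hπ2 hπ3 hπ4
  have hη : (δ1 + δ3) * 0 / (π1 + 0) + (δ1 + δ2) * 0 / (π1 + 0) + δ1 * (1 - π1) / π1
      = δ1 / π1 - δ1 := by
    simp only [mul_zero, zero_div, zero_add]
    field_simp
  have hmissing : δ2 + δ3 + δ4 = 1 - δ1 := by linarith
  rw [hη, hmissing]
  module

/-- degenerate-case reduction of the MI2 influence function. If
`δ₂ = δ₃ = 0`, `π₂ = π₃ = 0`, `π₄ = 1 − π₁` and `π₁ ≠ 0`, then
`Ψ = δ₁ S + (δ₂+δ₃+δ₄) S* + (S − S*) η` with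
`η = (δ₁+δ₃)π₂/(π₁+π₃) + (δ₁+δ₂)π₃/(π₁+π₂) + δ₁π₄/π₁`
reduces exactly to the augmented IPW form `(δ₁/π₁) S + (1 − δ₁/π₁) S*` of Wang and Chen
(2001). -/
theorem MI2_influence_degenerate {V : Type*} [AddCommGroup V] [Module ℝ V]
    (S Sstar : V) (δ1 δ2 δ3 δ4 : ℝ) (π1 π2 π3 π4 : ℝ)
    (hδsum : δ1 + δ2 + δ3 + δ4 = 1) (hδ2 : δ2 = 0) (hδ3 : δ3 = 0)
    (hπ2 : π2 = 0) (hπ3 : π3 = 0) (hπ4 : π4 = 1 - π1) (hπ1 : π1 ≠ 0) :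
    δ1 • S + (δ2 + δ3 + δ4) • Sstar
        + ((δ1 + δ3) * π2 / (π1 + π3) + (δ1 + δ2) * π3 / (π1 + π2) + δ1 * π4 / π1) •
            (S - Sstar)
      = (δ1 / π1) • S + (1 - δ1 / π1) • Sstar :=
  MI2_influence_degenerate_general S Sstar δ1 δ2 δ3 δ4 π1 π2 π3 π4 hδsum hπ2 hπ3 hπ4 hπ1
end
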